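/- arXiv:1007.1259 — 5 statements merged into one kernel-verified Lean document; each statement's English description precedes it below -/
import Mathlib

section
/- Consider merging k sorted arrays A[1..k] each of length n, by forming m subproblems where the p-th subproblem merges, for each i, the subsequence of A[i] consisting of elements A[i,j] with j ≡ p (mod m), and letting D[p] be the sorted output of the p-th subproblem. View D as an m × (nk/m) array with row p equal to D[p]. Then every row and every column of D is in sorted order, and every element in column j of D is less than or equal to every element in column j + k of D. -/
/-!
Fix a threshold `x` and let `cᵢ` be the number of entries of `A i` that are `≤ x`; as `A i` is
sorted these are its first `cᵢ` entries, so row `p` of `D` has exactly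
`∑ᵢ #{j < cᵢ | j ≡ p [MOD m]}` entries `≤ x`, and as `D p` is sorted, `D p j ≤ x` iff `j` is below
that count. Each summand equals `cᵢ / m + [p < cᵢ % m]`, which is antitone in `p` and changes by
at most one between residues. So the counts decrease down the rows and differ by at most `k`
between any two rows; taking `x = D p₂ j` gives the column and the shift-by-`k` inequalities.
-/

open Finset

theorem Monotone.le_iff_lt_card_filter_le {α : Type*} [LinearOrder α] {N : ℕ} {f : Fin N → α}
    (hf : Monotone f) (x : α) (j : Fin N) :
    f j ≤ x ↔ (j : ℕ) < #{i | f i ≤ x} := by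
  constructor
  · intro hj
    have hIic : Iic j ⊆ ({i | f i ≤ x} : Finset (Fin N)) := fun i hi => by
      simpa using (hf (mem_Iic.mp hi)).trans hj
    have := card_le_card hIic
    rw [Fin.card_Iic] at this
    omega
  · intro hj
    by_contra! hxj
    have hIio : ({i | f i ≤ x} : Finset (Fin N)) ⊆ Iio j := fun i hi => by
      simp only [mem_filter, mem_univ, true_and] at hi
      exact mem_Iio.mpr (lt_of_not_ge fun hji => (hxj.trans_le (hf hji)).not_ge hi)
    simpa using (card_le_card hIio).trans_lt' hj

theorem card_filter_mod_eq_and_le {α : Type*} [LinearOrder α] {N : ℕ} {f : Fin N → α}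
    (hf : Monotone f) (x : α) {m p : ℕ} (hp : p < m) :
    #{j : Fin N | (j : ℕ) % m = p ∧ f j ≤ x} = Nat.count (· ≡ p [MOD m]) #{j | f j ≤ x} := by
  have hcard : #{j | f j ≤ x} ≤ N := by simpa using card_filter_le (univ : Finset (Fin N)) _
  rw [Nat.count_eq_card_filter_range]
  refine card_bij (fun j _ => (j : ℕ)) (fun j hj => ?_) (fun _ _ _ _ h => Fin.val_injective h)
    (fun n hn => ?_)
  · simp only [mem_filter, mem_univ, true_and, mem_range] at hj ⊢
    rw [← hf.le_iff_lt_card_filter_le]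
    exact ⟨hj.2, by rw [Nat.ModEq, hj.1, Nat.mod_eq_of_lt hp]⟩
  · simp only [mem_filter, mem_range, Nat.ModEq, Nat.mod_eq_of_lt hp] at hn
    refine ⟨⟨n, hn.1.trans_le hcard⟩, ?_, rfl⟩
    simp only [mem_filter, mem_univ, true_and]
    exact ⟨hn.2, (hf.le_iff_lt_card_filter_le x _).2 hn.1⟩

theorem count_modEq_le_of_le {m c p₁ p₂ : ℕ} (h₁₂ : p₁ ≤ p₂) (h₂ : p₂ < m) :
    Nat.count (· ≡ p₂ [MOD m]) c ≤ Nat.count (· ≡ p₁ [MOD m]) c := by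
  rw [Nat.count_modEq_card _ (by omega), Nat.count_modEq_card _ (by omega),
    Nat.mod_eq_of_lt h₂, Nat.mod_eq_of_lt (h₁₂.trans_lt h₂)]
  split_ifs <;> omega

theorem count_modEq_le_count_modEq_add_one {m c p₁ p₂ : ℕ} (h₁ : p₁ < m) (h₂ : p₂ < m) :
    Nat.count (· ≡ p₂ [MOD m]) c ≤ Nat.count (· ≡ p₁ [MOD m]) c + 1 := by
  rw [Nat.count_modEq_card _ (by omega), Nat.count_modEq_card _ (by omega),
    Nat.mod_eq_of_lt h₁, Nat.mod_eq_of_lt h₂]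
  split_ifs <;> omega

section ResidueMerge

variable {α : Type*} [LinearOrder α] {k n N : ℕ}

def IsResidueMerge (A : Fin k → Fin n → α) (m p : ℕ) (r : Fin N → α) : Prop :=
  univ.val.map r =
    ({ij : Fin k × Fin n | (ij.2 : ℕ) % m = p} : Finset _).val.map fun ij => A ij.1 ij.2

theorem IsResidueMerge.card_filter_le {A : Fin k → Fin n → α} {m p : ℕ} {r : Fin N → α}
    (hr : IsResidueMerge A m p r) (x : α) :
    #{j | r j ≤ x} = ∑ i, #{j : Fin n | (j : ℕ) % m = p ∧ A i j ≤ x} := by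
  have := congrArg (Multiset.countP (· ≤ x)) hr
  rw [Multiset.countP_map, Multiset.countP_map] at this
  change #(filter _ univ) = #(filter _ (filter _ univ)) at this
  rw [this, filter_filter, card_filter, Fintype.sum_prod_type]
  simp only [card_filter]

theorem IsResidueMerge.card_filter_le_eq_sum_count {A : Fin k → Fin n → α}
    (hA : ∀ i, Monotone (A i)) {m p : ℕ} (hp : p < m) {r : Fin N → α}
    (hr : IsResidueMerge A m p r) (x : α) :
    #{j | r j ≤ x} = ∑ i, Nat.count (· ≡ p [MOD m]) #{j | A i j ≤ x} := by
  rw [hr.card_filter_le]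
  exact sum_congr rfl fun i _ => card_filter_mod_eq_and_le (hA i) x hp

variable {A : Fin k → Fin n → α} (hA : ∀ i, Monotone (A i)) {m p₁ p₂ : ℕ} {r₁ r₂ : Fin N → α}
include hA

theorem IsResidueMerge.card_filter_le_anti (hr₁ : IsResidueMerge A m p₁ r₁)
    (hr₂ : IsResidueMerge A m p₂ r₂) (h₁₂ : p₁ ≤ p₂) (h₂ : p₂ < m) (x : α) :
    #{j | r₂ j ≤ x} ≤ #{j | r₁ j ≤ x} := by
  rw [hr₁.card_filter_le_eq_sum_count hA (h₁₂.trans_lt h₂),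
    hr₂.card_filter_le_eq_sum_count hA h₂]
  exact sum_le_sum fun i _ => count_modEq_le_of_le h₁₂ h₂

theorem IsResidueMerge.card_filter_le_le_add (hr₁ : IsResidueMerge A m p₁ r₁)
    (hr₂ : IsResidueMerge A m p₂ r₂) (h₁ : p₁ < m) (h₂ : p₂ < m) (x : α) :
    #{j | r₂ j ≤ x} ≤ #{j | r₁ j ≤ x} + k := by
  rw [hr₁.card_filter_le_eq_sum_count hA h₁, hr₂.card_filter_le_eq_sum_count hA h₂]
  calc ∑ i, Nat.count (· ≡ p₂ [MOD m]) #{j | A i j ≤ x}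
      ≤ ∑ i : Fin k, (Nat.count (· ≡ p₁ [MOD m]) #{j | A i j ≤ x} + 1) :=
        sum_le_sum fun i _ => count_modEq_le_count_modEq_add_one h₁ h₂
    _ = ∑ i, Nat.count (· ≡ p₁ [MOD m]) #{j | A i j ≤ x} + k := by
        simp [sum_add_distrib]

end ResidueMerge

theorem lee_batcher_modular_merge_general
    {α : Type*} [LinearOrder α] (k m q : ℕ)
    (A : Fin k → Fin (m * q) → α) (hA : ∀ i, Monotone (A i))
    (D : Fin m → Fin (k * q) → α)
    (hDsorted : ∀ p, Monotone (D p))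
    (hDmerge : ∀ p : Fin m,
      (Finset.univ.val.map fun j : Fin (k * q) => D p j) =
      ((Finset.univ.filter
          (fun ij : Fin k × Fin (m * q) => (ij.2 : ℕ) % m = (p : ℕ))).val.map
        fun ij => A ij.1 ij.2)) :
    (∀ p, Monotone (D p)) ∧
    (∀ j : Fin (k * q), Monotone fun p => D p j) ∧
    (∀ j₁ j₂ : Fin (k * q), (j₁ : ℕ) + k = (j₂ : ℕ) →
      ∀ p₁ p₂ : Fin m, D p₁ j₁ ≤ D p₂ j₂) := by
  have hD : ∀ p : Fin m, IsResidueMerge A m p (D p) := hDmerge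
  have hrank : ∀ (p : Fin m) (j : Fin (k * q)), (j : ℕ) < #{j' | D p j' ≤ D p j} := fun p j =>
    ((hDsorted p).le_iff_lt_card_filter_le _ j).1 le_rfl
  refine ⟨hDsorted, fun j p₁ p₂ hp => ?_, fun j₁ j₂ hj p₁ p₂ => ?_⟩
  · rw [(hDsorted p₁).le_iff_lt_card_filter_le]
    exact (hrank p₂ j).trans_le ((hD p₁).card_filter_le_anti hA (hD p₂) hp p₂.isLt _)
  · rw [(hDsorted p₁).le_iff_lt_card_filter_le]
    have := (hD p₁).card_filter_le_le_add hA (hD p₂) p₁.isLt p₂.isLt (D p₂ j₂)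
    have := hrank p₂ j₂
    omega

/-- Lee–Batcher modular merging: given `k` sorted arrays
`A 1, …, A k`, each of length `n = m·q`, and letting row `p` of `D` be the sorted
merge of the subsequences consisting of the entries `A[i,j]` with `j ≡ p (mod m)`
(so `D` is an `m × (k·q)` array whose row `p` equals, as a multiset, the entries
with index `≡ p mod m`), every row and column of `D` is sorted, and every element
of column `j₁` is at most every element of column `j₂ = j₁ + k`. -/
theorem lee_batcher_modular_merge
    {α : Type*} [LinearOrder α] (k m q : ℕ) (hk : 1 ≤ k) (hm : 1 ≤ m) (hq : 1 ≤ q)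
    (A : Fin k → Fin (m * q) → α) (hA : ∀ i, Monotone (A i))
    (D : Fin m → Fin (k * q) → α)
    (hDsorted : ∀ p, Monotone (D p))
    (hDmerge : ∀ p : Fin m,
      (Finset.univ.val.map fun j : Fin (k * q) => D p j) =
      ((Finset.univ.filter
          (fun ij : Fin k × Fin (m * q) => (ij.2 : ℕ) % m = (p : ℕ))).val.map
        fun ij => A ij.1 ij.2)) :
    (∀ p, Monotone (D p)) ∧
    (∀ j : Fin (k * q), Monotone fun p => D p j) ∧
    (∀ j₁ j₂ : Fin (k * q), (j₁ : ℕ) + k = (j₂ : ℕ) →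
      ∀ p₁ p₂ : Fin m, D p₁ j₁ ≤ D p₂ j₂) :=
  lee_batcher_modular_merge_general k m q A hA D hDsorted hDmerge
end

section
/- Let D be an m × l matrix over a linearly ordered set such that every row and every column is nondecreasing, and every entry in column j is ≤ every entry in column j + k (for a parameter k ≤ l). Partition the columns of D into consecutive groups of k columns each, D₁, D₂, …. Then the mk smallest elements of D₁ ∪ D₂ (as a multiset) are all ≤ every element of D₃ ∪ D₄ ∪ …; consequently, the mk smallest elements of the whole matrix are contained in D₁ ∪ D₂. -/
/-!
Every entry of the first group `D₁` lies below every entry of `D₃ ∪ D₄ ∪ …`: an entry `D q c`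
with `c < k` is at most `D p (c + k)` by the gap condition, and `D p (c + k) ≤ D p j` along
row `p` since `c + k < 2k ≤ j`. So the `mk` entries of `D₁` alone witness the bound.
-/

lemma le_of_add_le_of_gap {ι α : Type*} [LinearOrder α] {l k : ℕ} (D : ι → Fin l → α)
    (hrow : ∀ p, Monotone (D p))
    (hgap : ∀ j₁ j₂ : Fin l, (j₁ : ℕ) + k = (j₂ : ℕ) → ∀ p₁ p₂, D p₁ j₁ ≤ D p₂ j₂)
    {c j : Fin l} (hcj : (c : ℕ) + k ≤ j) (q p : ι) : D q c ≤ D p j :=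
  calc D q c ≤ D p ⟨c + k, by omega⟩ := hgap _ _ rfl q p
    _ ≤ D p j := hrow p (Fin.mk_le_of_le_val hcj)

theorem sliding_window_merge_general
    {α : Type*} [LinearOrder α] (m l k : ℕ) (hl : k ≤ l)
    (D : Fin m → Fin l → α)
    (hrow : ∀ p, Monotone (D p))
    (hgap : ∀ j₁ j₂ : Fin l, (j₁ : ℕ) + k = (j₂ : ℕ) →
      ∀ p₁ p₂ : Fin m, D p₁ j₁ ≤ D p₂ j₂) :
    ∀ (p : Fin m) (j : Fin l), 2 * k ≤ (j : ℕ) →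
      m * k ≤ (Finset.univ.filter
        (fun pj : Fin m × Fin l => (pj.2 : ℕ) < 2 * k ∧ D pj.1 pj.2 ≤ D p j)).card := by
  intro p j hj
  let firstGroup :=
    Finset.univ.map ((Function.Embedding.refl (Fin m)).prodMap (Fin.castLEEmb hl))
  have hcard : firstGroup.card = m * k := by simp [firstGroup]
  rw [← hcard]
  refine Finset.card_le_card fun qc hqc => ?_
  obtain ⟨⟨q, c⟩, -, rfl⟩ := Finset.mem_map.mp hqc
  have hc : (Fin.castLE hl c : ℕ) < k := c.2
  simp only [Finset.mem_filter, Finset.mem_univ, true_and, Function.Embedding.coe_prodMap,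
    Fin.coe_castLEEmb, Prod.map_snd, Prod.map_fst]
  exact ⟨by omega, le_of_add_le_of_gap D hrow hgap (by omega) q p⟩

/-- sliding-window correctness: let `D` be an `m × l` matrix
with nondecreasing rows and columns, in which every entry in column `j₁` is at most
every entry in column `j₂ = j₁ + k`.  Then the `mk` smallest elements of the first
two groups `D₁ ∪ D₂` (columns `0, …, 2k-1`) are `≤` every element of the later
groups `D₃ ∪ D₄ ∪ …` (columns `≥ 2k`): for every entry `y = D p j` with `j ≥ 2k`,
at least `mk` entries in the first `2k` columns are `≤ y` (hence the `mk` smallest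
elements of the whole matrix also lie in the first `2k` columns). -/
theorem sliding_window_merge
    {α : Type*} [LinearOrder α] (m l k : ℕ) (hm : 1 ≤ m) (hk : 1 ≤ k) (hl : k ≤ l)
    (D : Fin m → Fin l → α)
    (hrow : ∀ p, Monotone (D p))
    (hcol : ∀ j : Fin l, Monotone fun p => D p j)
    (hgap : ∀ j₁ j₂ : Fin l, (j₁ : ℕ) + k = (j₂ : ℕ) →
      ∀ p₁ p₂ : Fin m, D p₁ j₁ ≤ D p₂ j₂) :
    ∀ (p : Fin m) (j : Fin l), 2 * k ≤ (j : ℕ) →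
      m * k ≤ (Finset.univ.filter
        (fun pj : Fin m × Fin l => (pj.2 : ℕ) < 2 * k ∧ D pj.1 pj.2 ≤ D p j)).card :=
  sliding_window_merge_general m l k hl D hrow hgap
end

section
/- The recurrence T(N) = k·T(N/k) + S(N) with T(N) = O(1) for N ≤ M, where k = ⌈(M/B)^{1/3}⌉ and S(N) is the cost of a k-way merge satisfying S(N) = m·S(N/m) + O(N/B) with m = ⌈(M/B)^{1/3}⌉ and S(N) = O(N/B) for N ≤ M, has solution T(N) = O((N/B)·log²_{M/B}(N/B)). -/
/-!
Both recurrences are unrolled along the levels `N, N/k, N/k², …` until the size drops to `M`,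
after `⌈log_k (N/M)⌉` levels. The merge recurrence costs `O(N/B)` per level, so
`S(N) = O((N/B) · log_k (N/M))`; feeding this into the sorting recurrence adds `O((N/B) · j)` at
level `j`, and summing over the levels gives `T(N) = O((N/B) · log_k² (N/M))`. Finally
`k ≥ (M/B)^{1/3}` turns `log_k` into at most `3 · log_{M/B}`.
-/

open Real

theorem induction_on_div {k M : ℝ} (hk : 1 < k) (hM : 0 < M) {P : ℝ → Prop}
    (step : ∀ N, M < N → (M < N / k → P (N / k)) → P N) : ∀ N, M < N → P N := by
  have hk0 : 0 < k := one_pos.trans hk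
  have levels : ∀ n : ℕ, ∀ N, M < N → N ≤ M * k ^ n → P N := by
    intro n
    induction n with
    | zero => intro N hN hle; simp at hle; linarith
    | succ n ih =>
      refine fun N hN hle => step N hN fun hNk => ih (N / k) hNk ?_
      rwa [div_le_iff₀ hk0, mul_assoc, ← pow_succ]
  intro N hN
  obtain ⟨n, hn⟩ := pow_unbounded_of_one_lt (N / M) hk
  exact levels n N hN (by rw [div_lt_iff₀' hM] at hn; exact hn.le)

theorem logb_div_div_base_self {k N M : ℝ} (hk : 1 < k) (hN : N ≠ 0) (hM : M ≠ 0) :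
    logb k (N / k / M) = logb k (N / M) - 1 := by
  rw [div_right_comm, logb_div (div_ne_zero hN hM) (by positivity), logb_self_eq_one hk]

section Recurrence

variable {f : ℝ → ℝ} {k M a : ℝ}

theorem le_mul_logb_add_two_of_recurrence (hk : 1 < k) (hM : 0 < M) (ha : 0 ≤ a)
    (hbase : ∀ N, 0 < N → N ≤ M → f N ≤ a * N)
    (hrec : ∀ N, M < N → f N ≤ k * f (N / k) + a * N) :
    ∀ N, M < N → f N ≤ a * N * (logb k (N / M) + 2) := by
  have hk0 : 0 < k := one_pos.trans hk
  refine induction_on_div hk hM fun N hN ih => ?_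
  have hN0 : 0 < N := hM.trans hN
  have hL : 0 ≤ logb k (N / M) := logb_nonneg hk ((one_le_div hM).mpr hN.le)
  have haN : 0 ≤ a * N := mul_nonneg ha hN0.le
  by_cases hNk : M < N / k
  · have hsub : k * f (N / k) ≤ a * N * (logb k (N / M) + 1) :=
      calc k * f (N / k) ≤ k * (a * (N / k) * (logb k (N / k / M) + 2)) :=
            mul_le_mul_of_nonneg_left (ih hNk) hk0.le
        _ = a * N * (logb k (N / M) + 1) := by
            rw [logb_div_div_base_self hk hN0.ne' hM.ne']
            field_simp
            ring
    linarith [hrec N hN]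
  · have hsub : k * f (N / k) ≤ a * N :=
      calc k * f (N / k) ≤ k * (a * (N / k)) :=
            mul_le_mul_of_nonneg_left (hbase _ (by positivity) (not_lt.mp hNk)) hk0.le
        _ = a * N := by field_simp
    linarith [hrec N hN, mul_nonneg haN hL]

theorem le_mul_logb_add_one_sq_of_recurrence {c : ℝ} (hk : 1 < k) (hM : 0 < M) (ha : 0 ≤ a)
    (hc : 0 ≤ c) (hbase : ∀ N, 0 < N → N ≤ M → f N ≤ c)
    (hrec : ∀ N, M < N → f N ≤ k * f (N / k) + a * N * (logb k (N / M) + 2)) :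
    ∀ N, M < N → f N ≤ (2 * a + k * c / M) * N * (logb k (N / M) + 1) ^ 2 := by
  have hk0 : 0 < k := one_pos.trans hk
  have he : 0 ≤ k * c / M := by positivity
  refine induction_on_div hk hM fun N hN ih => ?_
  have hN0 : 0 < N := hM.trans hN
  have hL : 0 ≤ logb k (N / M) := logb_nonneg hk ((one_le_div hM).mpr hN.le)
  have haN : 0 ≤ a * N := mul_nonneg ha hN0.le
  have heN : 0 ≤ k * c / M * N := mul_nonneg he hN0.le
  by_cases hNk : M < N / k
  · have hsub : k * f (N / k) ≤ (2 * a + k * c / M) * N * logb k (N / M) ^ 2 :=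
      calc k * f (N / k) ≤ k * ((2 * a + k * c / M) * (N / k) * (logb k (N / k / M) + 1) ^ 2) :=
            mul_le_mul_of_nonneg_left (ih hNk) hk0.le
        _ = (2 * a + k * c / M) * N * logb k (N / M) ^ 2 := by
            rw [logb_div_div_base_self hk hN0.ne' hM.ne', sub_add_cancel]
            field_simp
    nlinarith [hrec N hN, mul_nonneg haN hL,
      mul_nonneg heN (by positivity : 0 ≤ 2 * logb k (N / M) + 1)]
  · -- `N > M` turns the constant cost `k · c` of the last level into `(k c / M) · N`
    have hsub : k * f (N / k) ≤ k * c / M * N := by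
      calc k * f (N / k) ≤ k * c :=
            mul_le_mul_of_nonneg_left (hbase _ (by positivity) (not_lt.mp hNk)) hk0.le
        _ ≤ k * c / M * N := by
            rw [div_mul_eq_mul_div, le_div_iff₀ hM]
            exact mul_le_mul_of_nonneg_left hN.le (by positivity)
    nlinarith [hrec N hN, mul_nonneg haN hL,
      mul_nonneg heN (by positivity : 0 ≤ logb k (N / M) * (logb k (N / M) + 2)),
      mul_nonneg haN (by positivity : 0 ≤ logb k (N / M) * (2 * logb k (N / M) + 3))]

end Recurrence

theorem logb_le_logb_div_of_rpow_le {b k x r : ℝ} (hb : 1 < b) (hr : 0 < r) (hk : b ^ r ≤ k)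
    (hx : 1 ≤ x) : logb k x ≤ logb b x / r := by
  have hlogb : 0 < r * log b := mul_pos hr (log_pos hb)
  have hlogk : r * log b ≤ log k := by
    rw [← log_rpow (by linarith)]
    exact log_le_log (by positivity) hk
  rw [logb, logb, div_div, mul_comm (log b)]
  exact div_le_div_of_nonneg_left (log_nonneg hx) hlogb hlogk

theorem logb_div_add_one_le_three_mul_logb {M B k N : ℝ} (hB : 0 < B) (hb : 1 < M / B)
    (hk : (M / B) ^ ((1 : ℝ) / 3) ≤ k) (hN : M ≤ N) :
    logb k (N / M) + 1 ≤ 3 * logb (M / B) (N / B) := by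
  have hM : 0 < M := by rw [one_lt_div hB] at hb; linarith
  have hNM : 1 ≤ N / M := (one_le_div hM).mpr hN
  have hsplit : logb (M / B) (N / B) = logb (M / B) (N / M) + 1 := by
    rw [← logb_self_eq_one hb, ← logb_mul (by positivity) (by positivity)]
    congr 1
    field_simp
  have := logb_le_logb_div_of_rpow_le hb (by norm_num) hk hNM
  rw [hsplit]
  linarith

theorem mul_logb_add_one_sq_le_mul_logb_sq {M B k N a c : ℝ} (hB : 0 < B) (hb : 1 < M / B)
    (hk : (M / B) ^ ((1 : ℝ) / 3) ≤ k) (hkb : k ≤ M / B) (ha : 0 ≤ a) (hc : 0 ≤ c)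
    (hN : M < N) :
    (2 * (a / B) + k * c / M) * N * (logb k (N / M) + 1) ^ 2 ≤
      9 * (2 * a + c) * (N / B) * logb (M / B) (N / B) ^ 2 := by
  have hM : 0 < M := by rw [one_lt_div hB] at hb; linarith
  have hNB : 0 < N / B := div_pos (hM.trans hN) hB
  have hk1 : 1 < k := (one_lt_rpow hb (by norm_num)).trans_le hk
  have hcoef : (2 * (a / B) + k * c / M) * N ≤ (2 * a + c) * (N / B) :=
    calc (2 * (a / B) + k * c / M) * N = (2 * a + c * (k * B / M)) * (N / B) := by
          field_simp
      _ ≤ (2 * a + c) * (N / B) := by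
          refine mul_le_mul_of_nonneg_right ?_ hNB.le
          gcongr
          exact mul_le_of_le_one_right hc (div_le_one_of_le₀ ((le_div_iff₀ hB).mp hkb) hM.le)
  have hL : 0 ≤ logb k (N / M) + 1 :=
    add_nonneg (logb_nonneg hk1 ((one_le_div hM).mpr hN.le)) zero_le_one
  have hlog := logb_div_add_one_le_three_mul_logb hB hb hk hN.le
  calc (2 * (a / B) + k * c / M) * N * (logb k (N / M) + 1) ^ 2
      ≤ (2 * a + c) * (N / B) * (3 * logb (M / B) (N / B)) ^ 2 :=
        mul_le_mul hcoef (pow_le_pow_left₀ hL hlog 2) (by positivity)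
          (mul_nonneg (by positivity) hNB.le)
    _ = 9 * (2 * a + c) * (N / B) * logb (M / B) (N / B) ^ 2 := by ring

theorem natCeil_rpow_one_third_le_self {b : ℝ} (hb : 8 ≤ b) :
    (⌈b ^ ((1 : ℝ) / 3)⌉₊ : ℝ) ≤ b := by
  set x := b ^ ((1 : ℝ) / 3)
  have hcube : x ^ 3 = b := by
    rw [← rpow_natCast, ← rpow_mul (by linarith)]
    norm_num
  have hx : 2 ≤ x :=
    (pow_le_pow_iff_left₀ (by norm_num) (by positivity) (by norm_num : 3 ≠ 0)).mp (by linarith)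
  have hx1 : x + 1 ≤ x ^ 3 := by
    have hsq : 4 ≤ x ^ 2 := by nlinarith
    nlinarith [mul_le_mul_of_nonneg_right hsq (by linarith : 0 ≤ x)]
  linarith [Nat.ceil_lt_add_one (by positivity : 0 ≤ x)]

theorem mergesort_io_recurrence_general
    (M B c₀ c₁ : ℝ) (hB : 1 ≤ B) (hMB : 8 ≤ M / B)
    (hc₀ : 0 ≤ c₀) (hc₁ : 0 ≤ c₁)
    (k : ℕ) (hk : k = ⌈(M / B) ^ ((1 : ℝ) / 3)⌉₊)
    (T S : ℝ → ℝ)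
    (hTbase : ∀ N, 0 < N → N ≤ M → T N ≤ c₀)
    (hTrec : ∀ N, M < N → T N ≤ k * T (N / k) + S N)
    (hSbase : ∀ N, 0 < N → N ≤ M → S N ≤ c₁ * (N / B))
    (hSrec : ∀ N, M < N → S N ≤ k * S (N / k) + c₁ * (N / B)) :
    ∃ C : ℝ, 0 < C ∧ ∀ N, M ≤ N →
      T N ≤ C * (N / B) * (Real.logb (M / B) (N / B)) ^ 2 := by
  have hB0 : 0 < B := one_pos.trans_le hB
  have hb : 1 < M / B := by linarith
  have hM : 0 < M := by rw [le_div_iff₀ hB0] at hMB; linarith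
  have hkb : (M / B) ^ ((1 : ℝ) / 3) ≤ k := hk ▸ Nat.le_ceil _
  have hk1 : 1 < (k : ℝ) := (one_lt_rpow hb (by norm_num)).trans_le hkb
  have hkM : (k : ℝ) ≤ M / B := hk ▸ natCeil_rpow_one_third_le_self hMB
  have hS := le_mul_logb_add_two_of_recurrence hk1 hM (div_nonneg hc₁ hB0.le)
    (fun N hN hNM => (hSbase N hN hNM).trans_eq (by ring))
    (fun N hN => (hSrec N hN).trans_eq (by ring))
  have hT := le_mul_logb_add_one_sq_of_recurrence hk1 hM (div_nonneg hc₁ hB0.le) hc₀ hTbase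
    fun N hN => (hTrec N hN).trans (add_le_add_right (hS N hN) _)
  refine ⟨9 * (2 * c₁ + c₀) + 1, by positivity, fun N hN => ?_⟩
  rcases hN.eq_or_lt with rfl | hN
  · rw [logb_self_eq_one hb]
    nlinarith [hTbase _ hM le_rfl]
  calc T N ≤ (2 * (c₁ / B) + k * c₀ / M) * N * (logb k (N / M) + 1) ^ 2 := hT N hN
    _ ≤ 9 * (2 * c₁ + c₀) * (N / B) * logb (M / B) (N / B) ^ 2 :=
        mul_logb_add_one_sq_le_mul_logb_sq hB0 hb hkb hkM hc₁ hc₀ hN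
    _ ≤ (9 * (2 * c₁ + c₀) + 1) * (N / B) * logb (M / B) (N / B) ^ 2 := by
        have : 0 ≤ N / B * logb (M / B) (N / B) ^ 2 :=
          mul_nonneg (div_nonneg (hM.trans hN).le hB0.le) (sq_nonneg _)
        linarith

/-- I/O recurrence for the external-memory oblivious mergesort:
with `k = m = ⌈(M/B)^{1/3}⌉`, if `T(N) ≤ k·T(N/k) + S(N)` for `N > M`,
`T(N) = O(1)` for `N ≤ M`, and the merge cost satisfies
`S(N) ≤ m·S(N/m) + O(N/B)` for `N > M` with `S(N) = O(N/B)` for `N ≤ M`,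
then `T(N) = O((N/B)·log²_{M/B}(N/B))`. -/
theorem mergesort_io_recurrence
    (M B c₀ c₁ : ℝ) (hB : 1 ≤ B) (hMB : 8 ≤ M / B)
    (hc₀ : 0 ≤ c₀) (hc₁ : 0 ≤ c₁)
    (k : ℕ) (hk : k = ⌈(M / B) ^ ((1 : ℝ) / 3)⌉₊)
    (T S : ℝ → ℝ) (hT0 : ∀ N, 0 ≤ T N) (hS0 : ∀ N, 0 ≤ S N)
    (hTbase : ∀ N, 0 < N → N ≤ M → T N ≤ c₀)
    (hTrec : ∀ N, M < N → T N ≤ k * T (N / k) + S N)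
    (hSbase : ∀ N, 0 < N → N ≤ M → S N ≤ c₁ * (N / B))
    (hSrec : ∀ N, M < N → S N ≤ k * S (N / k) + c₁ * (N / B)) :
    ∃ C : ℝ, 0 < C ∧ ∀ N, M ≤ N →
      T N ≤ C * (N / B) * (Real.logb (M / B) (N / B)) ^ 2 :=
  mergesort_io_recurrence_general M B c₀ c₁ hB hMB hc₀ hc₁ k hk T S hTbase hTrec hSbase hSrec
end

section
/- Let γ(G) denote the cyclomatic number of a graph G (the minimum number of edges whose removal leaves G acyclic) and T(G) the number of connected components of G containing at least one cycle. In a cuckoo hash table with two tables of size m each storing a set of keys whose cuckoo graph is G, the minimum number of keys that must be placed in the stash equals γ(G) − T(G). -/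
/-- Adjacency of the cuckoo graph on the `2m` cells (two tables of `m` cells),
with one edge `(h₁ x, h₂ x)` per key `x`. -/
def cAdj (m n : ℕ) (h₁ h₂ : Fin n → Fin m) (u w : Fin m ⊕ Fin m) : Prop :=
  ∃ x : Fin n,
    (u = Sum.inl (h₁ x) ∧ w = Sum.inr (h₂ x)) ∨
    (u = Sum.inr (h₂ x) ∧ w = Sum.inl (h₁ x))

/-- Reachability (connectivity) in the cuckoo graph. -/
def cReach (m n : ℕ) (h₁ h₂ : Fin n → Fin m) (u w : Fin m ⊕ Fin m) : Prop :=
  Relation.ReflTransGen (cAdj m n h₁ h₂) u w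

/-- The number of connected components of the cuckoo graph (including
isolated vertices), as the cardinality of the quotient by connectivity. -/
noncomputable def numComponents (m n : ℕ) (h₁ h₂ : Fin n → Fin m) : ℕ :=
  Nat.card (Quot (cAdj m n h₁ h₂))

/-- The cyclomatic number `γ(G) = E - V + C` of the cuckoo graph (an integer;
it is nonnegative). -/
noncomputable def cyclomatic (m n : ℕ) (h₁ h₂ : Fin n → Fin m) : ℤ :=
  (n : ℤ) - 2 * m + numComponents m n h₁ h₂

/-- `v`'s component contains a cycle iff it has at least as many edges (keys whose
edge lies in the component) as vertices. -/
noncomputable def cyclicAt (m n : ℕ) (h₁ h₂ : Fin n → Fin m) (v : Fin m ⊕ Fin m) : Prop :=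
  ({w | cReach m n h₁ h₂ v w} : Set (Fin m ⊕ Fin m)).ncard ≤
    Nat.card {x : Fin n // cReach m n h₁ h₂ v (Sum.inl (h₁ x))}

/-- `T(G)`: the number of connected components containing at least one cycle. -/
noncomputable def numCyclicComponents (m n : ℕ) (h₁ h₂ : Fin n → Fin m) : ℕ :=
  ({c : Quot (cAdj m n h₁ h₂) | ∃ v, Quot.mk _ v = c ∧ cyclicAt m n h₁ h₂ v}).ncard

/-- The minimum possible stash size over all valid placements: each key `x` is
placed in cell `h₁ x` of table 1, cell `h₂ x` of table 2, or the stash (`none`),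
with each cell holding at most one key. -/
noncomputable def minStash (m n : ℕ) (h₁ h₂ : Fin n → Fin m) : ℕ :=
  sInf {s : ℕ | ∃ σ : Fin n → Option (Fin m ⊕ Fin m),
    (∀ x, σ x = none ∨ σ x = some (Sum.inl (h₁ x)) ∨ σ x = some (Sum.inr (h₂ x))) ∧
    (∀ x y, σ x ≠ none → σ x = σ y → x = y) ∧
    Nat.card {x : Fin n // σ x = none} = s}

/-!
A placement stores each key in one of its two cells or in the stash, at most one key per cell,
so it stashes `n - 2m + F` keys when `F` of the `2m` cells stay free. As
`γ(G) - T(G) = n - 2m + (C - T)` and `C - T` counts the components with fewer keys than cells,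
it suffices to show that the least possible `F` is the number of such components.

In such a component the stored keys cannot fill every cell, so some cell stays free.
Conversely, root every component and store in each other cell the key leading to a neighbour
closer to the root (a breadth-first spanning tree). These parent keys are one fewer than the
cells, so in a component with at least as many keys as cells some key `e` is not a parent key;
the parent keys keep the component connected without `e`, so we may re-root at an endpoint
of `e`, rebuild the tree without `e`, and store `e` at the root. Then only the roots of the
components with fewer keys than cells stay free.
-/

open Relation Finset

namespace KeyGraph

variable {V X : Type*}

section Graph

variable (f g : X → V)

def Joins (x : X) (u w : V) : Prop := u = f x ∧ w = g x ∨ u = g x ∧ w = f x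

def Adj (u w : V) : Prop := ∃ x, Joins f g x u w

variable {f g} {x : X} {u u' w ρ : V}

theorem Joins.symm (h : Joins f g x u w) : Joins f g x w u :=
  (Or.symm h).imp And.symm And.symm

theorem Joins.eq_or_eq (h : Joins f g x u w) : u = f x ∨ u = g x :=
  h.imp And.left And.left

instance : Std.Symm (Adj f g) := ⟨fun _ _ ⟨x, h⟩ => ⟨x, h.symm⟩⟩

variable (f g) in
/-- The simple graph underlying `Adj f g`, which forgets loops and parallel keys; it is used
only for its distance function. -/
def graph : SimpleGraph V := .fromEdgeSet (Sym2.fromRel (inferInstance : Std.Symm (Adj f g)))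

theorem quot_mk_eq_iff : Quot.mk (Adj f g) u = Quot.mk _ w ↔ ReflTransGen (Adj f g) u w := by
  rw [Quot.eq, EqvGen.eqvGen_eq_reflTransGen]

theorem quot_mk_eq_of_eq_or_eq (h : u = f x ∨ u = g x) :
    Quot.mk (Adj f g) u = Quot.mk _ (f x) := by
  rcases h with rfl | rfl
  · rfl
  · exact Quot.sound ⟨x, .inr ⟨rfl, rfl⟩⟩

theorem reachable_graph_iff : (graph f g).Reachable u w ↔ ReflTransGen (Adj f g) u w := by
  rw [graph, SimpleGraph.reachable_fromEdgeSet_fromRel_eq_reflTransGen]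

theorem exists_joins_dist_lt (h : ReflTransGen (Adj f g) u ρ) (hne : u ≠ ρ) :
    ∃ x w, Joins f g x u w ∧ (graph f g).dist w ρ < (graph f g).dist u ρ := by
  obtain ⟨p, hp⟩ := (reachable_graph_iff.2 h).exists_walk_length_eq_dist
  cases p with
  | nil => exact absurd rfl hne
  | cons hadj q =>
    rw [graph, SimpleGraph.fromEdgeSet_adj, Sym2.fromRel_prop] at hadj
    obtain ⟨⟨x, hx⟩, -⟩ := hadj
    refine ⟨x, _, hx, (SimpleGraph.dist_le q).trans_lt ?_⟩
    rw [← hp, SimpleGraph.Walk.length_cons]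
    exact Nat.lt_succ_self _

open Classical in
variable (f g) in
/-- The key from `u` to a neighbour closer to `ρ`: the edges of a breadth-first spanning tree of
the component of `ρ`. -/
noncomputable def parentKey (ρ u : V) : Option X :=
  if h : ∃ x w, Joins f g x u w ∧ (graph f g).dist w ρ < (graph f g).dist u ρ
  then some h.choose else none

theorem exists_of_parentKey_eq_some (h : parentKey f g ρ u = some x) :
    ∃ w, Joins f g x u w ∧ (graph f g).dist w ρ < (graph f g).dist u ρ := by
  unfold parentKey at h
  split_ifs at h with hex
  exact Option.some_injective _ h ▸ hex.choose_spec

theorem exists_parentKey_eq_some (h : ReflTransGen (Adj f g) u ρ) (hne : u ≠ ρ) :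
    ∃ x, parentKey f g ρ u = some x := by
  rw [parentKey, dif_pos (exists_joins_dist_lt h hne)]
  exact ⟨_, rfl⟩

theorem reflTransGen_and_ne_of_parentKey_eq_some (h : parentKey f g ρ u = some x) :
    ReflTransGen (Adj f g) u ρ ∧ u ≠ ρ := by
  obtain ⟨w, -, hlt⟩ := exists_of_parentKey_eq_some h
  have hpos : (graph f g).dist u ρ ≠ 0 := by omega
  rw [Ne, SimpleGraph.dist_eq_zero_iff_eq_or_not_reachable, reachable_graph_iff] at hpos
  tauto

/-- Two cells with the same parent key would each be closer to the root than the other. -/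
theorem parentKey_inj (h : parentKey f g ρ u = some x) (h' : parentKey f g ρ u' = some x) :
    u = u' := by
  obtain ⟨w, hj, hlt⟩ := exists_of_parentKey_eq_some h
  obtain ⟨w', hj', hlt'⟩ := exists_of_parentKey_eq_some h'
  rcases hj with ⟨rfl, rfl⟩ | ⟨rfl, rfl⟩ <;> rcases hj' with ⟨rfl, rfl⟩ | ⟨rfl, rfl⟩ <;>
    first | rfl | omega

/-- Following parent keys leads from every cell of the component to the root. -/
theorem reflTransGen_domRestrict_of_parentKey_mem (K : Set X)
    (hK : ∀ u x, parentKey f g ρ u = some x → x ∈ K) (h : ReflTransGen (Adj f g) u ρ) :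
    ReflTransGen (Adj (K.domRestrict f) (K.domRestrict g)) u ρ := by
  induction hd : (graph f g).dist u ρ using Nat.strong_induction_on generalizing u with
  | _ d ih =>
  by_cases hne : u = ρ
  · exact hne ▸ .refl
  obtain ⟨x, hx⟩ := exists_parentKey_eq_some h hne
  obtain ⟨w, hj, hlt⟩ := exists_of_parentKey_eq_some hx
  have hw : ReflTransGen (Adj f g) w ρ := .head ⟨x, hj.symm⟩ h
  exact .head ⟨⟨x, hK u x hx⟩, hj⟩ (ih _ (hd ▸ hlt) hw rfl)

end Graph

section Components

open Classical

variable {f g : X → V} {x : X} {u u' : V}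

variable (f g) in
noncomputable def vertsOf [Fintype V] (c : Quot (Adj f g)) : Finset V := {u | Quot.mk _ u = c}

variable (f g) in
noncomputable def keysOf [Fintype X] (c : Quot (Adj f g)) : Finset X :=
  {x | Quot.mk _ (f x) = c}

variable (f g) in
def Cyclic [Fintype V] [Fintype X] (c : Quot (Adj f g)) : Prop :=
  #(vertsOf f g c) ≤ #(keysOf f g c)

@[simp] theorem mem_vertsOf [Fintype V] {c : Quot (Adj f g)} :
    u ∈ vertsOf f g c ↔ Quot.mk _ u = c := by
  simp [vertsOf]

@[simp] theorem mem_keysOf [Fintype X] {c : Quot (Adj f g)} :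
    x ∈ keysOf f g c ↔ Quot.mk _ (f x) = c := by
  simp [keysOf]

theorem ncard_reflTransGen [Fintype V] (v : V) :
    {w | ReflTransGen (Adj f g) v w}.ncard = #(vertsOf f g (Quot.mk _ v)) := by
  rw [← Set.ncard_coe_finset]
  congr 1
  ext w
  simp [eq_comm, quot_mk_eq_iff]

theorem card_reflTransGen_keys [Fintype X] (v : V) :
    Nat.card {x // ReflTransGen (Adj f g) v (f x)} = #(keysOf f g (Quot.mk _ v)) := by
  rw [Nat.card_eq_fintype_card, Fintype.card_subtype]
  congr 1
  ext x
  simp [eq_comm, quot_mk_eq_iff]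

variable [Fintype V] [Fintype X]

noncomputable instance : Fintype (Quot (Adj f g)) := .ofFinite _

variable (f g) in
theorem natCard_quot_eq_add :
    Nat.card (Quot (Adj f g)) = #{c | Cyclic f g c} + #{c | ¬Cyclic f g c} := by
  rw [Nat.card_eq_fintype_card, ← card_univ, card_filter_add_card_filter_not]

theorem exists_key_ne_parentKey {r : V} (hc : Cyclic f g (Quot.mk _ r)) :
    ∃ e ∈ keysOf f g (Quot.mk _ r), ∀ u, parentKey f g r u ≠ some e := by
  by_contra! hall
  -- every key of the component would be the parent key of one of its cells other than `r`
  have hsurj : Set.SurjOn (parentKey f g r) ↑((vertsOf f g (Quot.mk _ r)).erase r)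
      ↑((keysOf f g (Quot.mk _ r)).map .some) := by
    intro o ho
    obtain ⟨x, hx, rfl⟩ := mem_map.1 ho
    obtain ⟨u, hu⟩ := hall x hx
    obtain ⟨hur, hne⟩ := reflTransGen_and_ne_of_parentKey_eq_some hu
    exact ⟨u, by simpa [hne] using quot_mk_eq_iff.2 hur, hu⟩
  have hle := card_le_card_of_surjOn _ hsurj
  rw [card_map, card_erase_of_mem (by simp)] at hle
  have hpos : 0 < #(vertsOf f g (Quot.mk _ r)) := card_pos.2 ⟨r, by simp⟩
  exact absurd hc (by unfold Cyclic; omega)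

theorem exists_root (c : Quot (Adj f g)) :
    ∃ (ρ : V) (e : Option X), Quot.mk _ ρ = c ∧ (e.isSome ↔ Cyclic f g c) ∧
      (∀ x, e = some x → f x = ρ) ∧
      ∀ u, Quot.mk _ u = c →
        ReflTransGen (Adj ({x | e ≠ some x}.domRestrict f) ({x | e ≠ some x}.domRestrict g))
          u ρ := by
  obtain ⟨r, rfl⟩ := Quot.exists_rep c
  have hreach : ∀ u, Quot.mk (Adj f g) u = Quot.mk _ r → ReflTransGen (Adj f g) u r :=
    fun u => quot_mk_eq_iff.1
  by_cases hc : Cyclic f g (Quot.mk _ r)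
  · obtain ⟨e, he, he_parent⟩ := exists_key_ne_parentKey hc
    set K : Set X := {x | some e ≠ some x}
    have hK : ∀ u x, parentKey f g r u = some x → x ∈ K := by
      rintro u x hu hx
      exact he_parent u (hu.trans hx.symm)
    have hroot : ReflTransGen (Adj (K.domRestrict f) (K.domRestrict g)) (f e) r :=
      reflTransGen_domRestrict_of_parentKey_mem K hK (hreach _ (mem_keysOf.1 he))
    refine ⟨f e, some e, mem_keysOf.1 he, by simp [hc], by simp, fun u hu => ?_⟩
    exact (reflTransGen_domRestrict_of_parentKey_mem K hK (hreach u hu)).trans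
      (Std.Symm.symm _ _ hroot)
  · refine ⟨r, none, rfl, by simp [hc], by simp, fun u hu => ?_⟩
    exact reflTransGen_domRestrict_of_parentKey_mem _ (fun _ _ _ => by simp) (hreach u hu)

variable (f g) in
noncomputable def root (c : Quot (Adj f g)) : V := (exists_root c).choose

variable (f g) in
noncomputable def extraKey (c : Quot (Adj f g)) : Option X := (exists_root c).choose_spec.choose

variable (f g) in
def keptKeys (c : Quot (Adj f g)) : Set X := {x | extraKey f g c ≠ some x}

theorem quot_mk_root (c : Quot (Adj f g)) : Quot.mk _ (root f g c) = c :=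
  (exists_root c).choose_spec.choose_spec.1

theorem isSome_extraKey_iff (c : Quot (Adj f g)) : (extraKey f g c).isSome ↔ Cyclic f g c :=
  (exists_root c).choose_spec.choose_spec.2.1

theorem eq_root_of_extraKey_eq_some {c : Quot (Adj f g)} (h : extraKey f g c = some x) :
    f x = root f g c :=
  (exists_root c).choose_spec.choose_spec.2.2.1 x h

theorem reflTransGen_root {c : Quot (Adj f g)} (hu : Quot.mk _ u = c) :
    ReflTransGen (Adj ((keptKeys f g c).domRestrict f) ((keptKeys f g c).domRestrict g)) u
      (root f g c) :=
  (exists_root c).choose_spec.choose_spec.2.2.2 u hu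

variable (f g) in
noncomputable def occupant (u : V) : Option X :=
  if u = root f g (Quot.mk _ u) then extraKey f g (Quot.mk _ u)
  else (parentKey ((keptKeys f g (Quot.mk _ u)).domRestrict f)
    ((keptKeys f g (Quot.mk _ u)).domRestrict g) (root f g (Quot.mk _ u)) u).map (↑)

theorem eq_or_eq_of_occupant_eq_some (h : occupant f g u = some x) : u = f x ∨ u = g x := by
  unfold occupant at h
  split_ifs at h with hu
  · exact .inl (hu.trans (eq_root_of_extraKey_eq_some h).symm)
  · obtain ⟨a, ha, rfl⟩ := Option.map_eq_some_iff.1 h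
    obtain ⟨w, hj, -⟩ := exists_of_parentKey_eq_some ha
    exact hj.eq_or_eq

theorem occupant_inj (h : occupant f g u = some x) (h' : occupant f g u' = some x) : u = u' := by
  have hc : Quot.mk (Adj f g) u' = Quot.mk _ u :=
    (quot_mk_eq_of_eq_or_eq (eq_or_eq_of_occupant_eq_some h')).trans
      (quot_mk_eq_of_eq_or_eq (eq_or_eq_of_occupant_eq_some h)).symm
  unfold occupant at h h'
  rw [hc] at h'
  -- a parent key is never the extra key, which was deleted before the tree was built
  split_ifs at h h' with hu hu'
  · exact hu.trans hu'.symm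
  · obtain ⟨a, -, rfl⟩ := Option.map_eq_some_iff.1 h'
    exact absurd h a.2
  · obtain ⟨a, -, rfl⟩ := Option.map_eq_some_iff.1 h
    exact absurd h' a.2
  · obtain ⟨a, ha, rfl⟩ := Option.map_eq_some_iff.1 h
    obtain ⟨a', ha', haa'⟩ := Option.map_eq_some_iff.1 h'
    rw [Subtype.val_injective haa'] at ha'
    exact parentKey_inj ha ha'

theorem occupant_eq_none_iff :
    occupant f g u = none ↔ u = root f g (Quot.mk _ u) ∧ ¬Cyclic f g (Quot.mk _ u) := by
  rw [← isSome_extraKey_iff, Option.not_isSome_iff_eq_none, occupant]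
  split_ifs with hu
  · exact ⟨fun h => ⟨hu, h⟩, And.right⟩
  · refine ⟨fun h => absurd h ?_, fun h => absurd h.1 hu⟩
    obtain ⟨a, ha⟩ := exists_parentKey_eq_some (reflTransGen_root rfl) hu
    simp [ha]

theorem card_occupant_eq_none :
    #{u | occupant f g u = none} = #{c : Quot (Adj f g) | ¬Cyclic f g c} := by
  apply card_nbij' (Quot.mk _) (root f g)
  · intro u hu
    simpa using (occupant_eq_none_iff.1 (mem_filter.1 hu).2).2
  · intro c hc
    simpa [occupant_eq_none_iff, quot_mk_root] using (mem_filter.1 hc).2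
  · intro u hu
    exact (occupant_eq_none_iff.1 (mem_filter.1 hu).2).1.symm
  · intro c _
    exact quot_mk_root c

end Components

section Placements

variable (f g : X → V)

def IsPlacement (σ : X → Option V) : Prop :=
  (∀ x, σ x = none ∨ σ x = some (f x) ∨ σ x = some (g x)) ∧
    ∀ x y, σ x ≠ none → σ x = σ y → x = y

variable {f g}

theorem exists_placement_of_occupancy (o : V → Option X)
    (hinc : ∀ u x, o u = some x → u = f x ∨ u = g x)
    (hinj : ∀ u u' x, o u = some x → o u' = some x → u = u') :
    ∃ σ, IsPlacement f g σ ∧ ∀ u, (∀ x, σ x ≠ some u) ↔ o u = none := by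
  classical
  let σ x : Option V := if h : ∃ u, o u = some x then some h.choose else none
  have hσ : ∀ x u, σ x = some u ↔ o u = some x := by
    intro x u
    by_cases h : ∃ u, o u = some x
    · simp only [σ, dif_pos h, Option.some.injEq]
      exact ⟨fun hu => hu ▸ h.choose_spec, fun hu => hinj _ _ _ h.choose_spec hu⟩
    · simp only [σ, dif_neg h, reduceCtorEq, false_iff]
      exact fun hu => h ⟨u, hu⟩
  refine ⟨σ, ⟨fun x => ?_, fun x y hx hxy => ?_⟩, fun u => ?_⟩
  · obtain hx | ⟨u, hu⟩ := Option.eq_none_or_eq_some (σ x)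
    · exact .inl hx
    · rcases hinc u x ((hσ x u).1 hu) with rfl | rfl <;> simp [hu]
  · obtain ⟨u, hu⟩ := Option.ne_none_iff_exists'.1 hx
    exact Option.some_injective _ (((hσ x u).1 hu).symm.trans ((hσ y u).1 (hxy ▸ hu)))
  · refine ⟨fun h => Option.eq_none_iff_forall_ne_some.2 fun x hx => h x ((hσ x u).2 hx),
      fun h x hx => ?_⟩
    simp [(hσ x u).1 hx] at h

open Classical

variable [Fintype V] [Fintype X] {σ : X → Option V}

theorem card_stash_add_card (hσ : IsPlacement f g σ) :
    #{x | σ x = none} + Fintype.card V = Fintype.card X + #{u | ∀ x, σ x ≠ some u} := by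
  have hX := card_filter_add_card_filter_not (s := univ) (fun x => σ x = none)
  have hV := card_filter_add_card_filter_not (s := univ) (fun u => ∀ x, σ x ≠ some u)
  have hplaced : #{x | ¬σ x = none} = #{u | ¬∀ x, σ x ≠ some u} := by
    apply card_nbij (fun x => (σ x).getD (f x))
    · intro x hx
      obtain ⟨u, hu⟩ := Option.ne_none_iff_exists'.1 (mem_filter.1 hx).2
      simp only [coe_filter, mem_univ, true_and, hu, Option.getD_some]
      exact fun h => h x hu
    · intro x hx y hy hxy
      obtain ⟨u, hu⟩ := Option.ne_none_iff_exists'.1 (mem_filter.1 hx).2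
      obtain ⟨w, hw⟩ := Option.ne_none_iff_exists'.1 (mem_filter.1 hy).2
      simp only [hu, hw, Option.getD_some] at hxy
      exact hσ.2 x y (by simp [hu]) (by rw [hu, hw, hxy])
    · intro u hu
      simp only [coe_filter, mem_univ, true_and, not_forall, not_not] at hu
      obtain ⟨x, hx⟩ := hu
      exact ⟨x, by simp [hx], by simp [hx]⟩
  rw [card_univ] at hX hV
  omega

theorem exists_free_of_not_cyclic (hσ : IsPlacement f g σ) {c : Quot (Adj f g)}
    (hc : ¬Cyclic f g c) : ∃ u, Quot.mk _ u = c ∧ ∀ x, σ x ≠ some u := by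
  by_contra! h
  refine hc (card_le_card_of_surjOn (fun x => (σ x).getD (f x)) fun u hu => ?_)
  obtain ⟨x, hx⟩ := h u (mem_vertsOf.1 hu)
  have hux : u = f x ∨ u = g x := by
    rcases hσ.1 x with h0 | h0 | h0 <;> rw [hx] at h0 <;> simp_all
  exact ⟨x, mem_keysOf.2 ((quot_mk_eq_of_eq_or_eq hux).symm.trans (mem_vertsOf.1 hu)),
    by simp [hx]⟩

theorem card_add_card_not_cyclic_le (hσ : IsPlacement f g σ) :
    Fintype.card X + #{c : Quot (Adj f g) | ¬Cyclic f g c} ≤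
      #{x | σ x = none} + Fintype.card V := by
  rw [card_stash_add_card hσ, add_le_add_iff_left]
  calc #{c : Quot (Adj f g) | ¬Cyclic f g c}
      ≤ #(({u | ∀ x, σ x ≠ some u} : Finset V).image (Quot.mk _)) := by
        refine card_le_card fun c hc => ?_
        obtain ⟨u, rfl, hu⟩ := exists_free_of_not_cyclic hσ (mem_filter.1 hc).2
        exact mem_image_of_mem _ (by simpa using hu)
    _ ≤ #{u | ∀ x, σ x ≠ some u} := card_image_le

variable (f g) in
theorem exists_placement_card_eq :
    ∃ σ, IsPlacement f g σ ∧ #{x | σ x = none} + Fintype.card V =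
      Fintype.card X + #{c : Quot (Adj f g) | ¬Cyclic f g c} := by
  obtain ⟨σ, hσ, hfree⟩ := exists_placement_of_occupancy (occupant f g)
    (fun _ _ => eq_or_eq_of_occupant_eq_some) (fun _ _ _ => occupant_inj)
  refine ⟨σ, hσ, ?_⟩
  rw [card_stash_add_card hσ, ← card_occupant_eq_none]
  simp only [hfree]

end Placements

end KeyGraph

-- `cAdj m n h₁ h₂` unfolds to `KeyGraph.Adj (Sum.inl ∘ h₁) (Sum.inr ∘ h₂)`, so the results
-- above apply to the cuckoo graph verbatim.
namespace Cuckoo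

open KeyGraph Classical

variable (m n : ℕ) (h₁ h₂ : Fin n → Fin m)

theorem minStash_add_two_mul :
    minStash m n h₁ h₂ + 2 * m = n + #{c | ¬Cyclic (Sum.inl ∘ h₁) (Sum.inr ∘ h₂) c} := by
  have hcard : ∀ σ : Fin n → Option (Fin m ⊕ Fin m),
      Nat.card {x // σ x = none} = #{x | σ x = none} := fun σ => by
    rw [Nat.card_eq_fintype_card, Fintype.card_subtype]
  obtain ⟨σ, hσ, hσcard⟩ := exists_placement_card_eq (Sum.inl ∘ h₁) (Sum.inr ∘ h₂)
  have hmin : minStash m n h₁ h₂ = #{x | σ x = none} := by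
    refine le_antisymm (Nat.sInf_le ⟨σ, hσ.1, hσ.2, hcard σ⟩)
      (le_csInf ⟨_, σ, hσ.1, hσ.2, rfl⟩ ?_)
    rintro _ ⟨τ, hτ₁, hτ₂, rfl⟩
    have := card_add_card_not_cyclic_le (f := Sum.inl ∘ h₁) (g := Sum.inr ∘ h₂) ⟨hτ₁, hτ₂⟩
    rw [hcard]
    omega
  simp only [Fintype.card_sum, Fintype.card_fin] at hσcard
  omega

theorem cyclicAt_iff (v : Fin m ⊕ Fin m) :
    cyclicAt m n h₁ h₂ v ↔ Cyclic (Sum.inl ∘ h₁) (Sum.inr ∘ h₂) (Quot.mk _ v) := by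
  rw [Cyclic, ← ncard_reflTransGen, ← card_reflTransGen_keys]
  rfl

theorem numCyclicComponents_eq :
    numCyclicComponents m n h₁ h₂ = #{c | Cyclic (Sum.inl ∘ h₁) (Sum.inr ∘ h₂) c} := by
  rw [numCyclicComponents, ← Set.ncard_coe_finset]
  congr 1
  ext c
  obtain ⟨v, rfl⟩ := Quot.exists_rep c
  simp only [coe_filter, mem_univ, true_and]
  exact ⟨fun ⟨w, hw, hc⟩ => hw ▸ (cyclicAt_iff m n h₁ h₂ w).1 hc,
    fun hc => ⟨v, rfl, (cyclicAt_iff m n h₁ h₂ v).2 hc⟩⟩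

theorem numCyclicComponents_add_card_not_cyclic :
    numCyclicComponents m n h₁ h₂ + #{c | ¬Cyclic (Sum.inl ∘ h₁) (Sum.inr ∘ h₂) c} =
      numComponents m n h₁ h₂ := by
  rw [numCyclicComponents_eq, numComponents]
  exact (natCard_quot_eq_add _ _).symm

end Cuckoo

/-- the minimum number of keys that must be placed in the stash
equals `γ(G) − T(G)`, the cyclomatic number minus the number of cyclic components. -/
theorem minStash_eq_cyclomatic_sub_cyclicComponents
    (m n : ℕ) (h₁ h₂ : Fin n → Fin m) :
    (minStash m n h₁ h₂ : ℤ) =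
      cyclomatic m n h₁ h₂ - numCyclicComponents m n h₁ h₂ := by
  have hstash := Cuckoo.minStash_add_two_mul m n h₁ h₂
  have hcomp := Cuckoo.numCyclicComponents_add_card_not_cyclic m n h₁ h₂
  rw [cyclomatic, ← hcomp]
  push_cast
  omega
end

section
/- Suppose Pr(γ(C_v) ≥ t | |C_v| = k) ≤ (3e⁵k³/m)^t and Pr(|C_v| ≥ k) ≤ β^k for a constant β ∈ (0,1). If m = Ω(log⁷ n) and t = O(log n), then Pr(γ(C_v) ≥ t) ≤ Σ_{k=1}^{∞} min((3e⁵k³/m)^t, 1)·β^k = m^{-Ω(t)} + n^{-ω(1)}, i.e., the component excess exceeds t with probability m^{-Ω(t)} plus a superpolynomially small (in n) term. -/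
/-!
Conditioning on the component size bounds the tail by `∑ₖ min((3e⁵k³/m)^t, 1) βᵏ`. Split this sum
at `k = ⌈log² n⌉`. Below the split `k³ ≤ log⁶ n`, which is at most `m^{13/14}` once `m ≥ c₁ log⁷ n`
and `n` is large, so the head is at most `m^{-t/14}/(1 - β) ≤ m^{-t/28}`. Above the split the
geometric tail `β^{log² n}/(1 - β)` is eventually below every `n^{-d}`.
-/

open MeasureTheory Filter
open scoped ENNReal

lemma measure_le_ofReal_tsum_min_mul {Ω : Type*} [MeasurableSpace Ω] (μ : Measure Ω)
    (A : Set Ω) (C : Ω → ℕ) {p q : ℕ → ℝ} (hp : ∀ k, 0 ≤ p k) (hq : ∀ k, 0 ≤ q k)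
    (hq_sum : Summable q) (hC : ∀ k, μ {ω | C ω = k} ≤ ENNReal.ofReal (q k))
    (hA : ∀ k, μ (A ∩ {ω | C ω = k}) ≤ ENNReal.ofReal (p k) * μ {ω | C ω = k}) :
    μ A ≤ ENNReal.ofReal (∑' k, min (p k) 1 * q k) := by
  have hmin : ∀ k, 0 ≤ min (p k) 1 := fun k => le_min (hp k) zero_le_one
  have hterm : ∀ k, μ (A ∩ {ω | C ω = k}) ≤ ENNReal.ofReal (min (p k) 1 * q k) := by
    intro k
    rw [ENNReal.ofReal_mul (hmin k)]
    rcases le_total (p k) 1 with h | h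
    · rw [min_eq_left h]
      exact (hA k).trans (by gcongr; exact hC k)
    · rw [min_eq_right h, ENNReal.ofReal_one, one_mul]
      exact (measure_mono Set.inter_subset_right).trans (hC k)
  have hnonneg : ∀ k, 0 ≤ min (p k) 1 * q k := fun k => mul_nonneg (hmin k) (hq k)
  have hsum : Summable fun k => min (p k) 1 * q k :=
    hq_sum.of_nonneg_of_le hnonneg fun k => mul_le_of_le_one_left (hq k) (min_le_right _ _)
  calc μ A = μ (⋃ k, A ∩ {ω | C ω = k}) := by
        rw [← Set.inter_iUnion, Set.iUnion_eq_univ_iff.mpr fun ω => ⟨C ω, rfl⟩, Set.inter_univ]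
    _ ≤ ∑' k, μ (A ∩ {ω | C ω = k}) := measure_iUnion_le _
    _ ≤ ∑' k, ENNReal.ofReal (min (p k) 1 * q k) := ENNReal.tsum_le_tsum hterm
    _ = ENNReal.ofReal (∑' k, min (p k) 1 * q k) :=
        (ENNReal.ofReal_tsum_of_nonneg hnonneg hsum).symm

lemma tsum_min_mul_geometric_le {β ε : ℝ} {x : ℕ → ℝ} (N : ℕ) (hβ0 : 0 ≤ β) (hβ1 : β < 1)
    (hx : ∀ k, 0 ≤ x k) (hε0 : 0 ≤ ε) (hε : ∀ k < N, x k ≤ ε) :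
    ∑' k, min (x k) 1 * β ^ k ≤ (ε + β ^ N) / (1 - β) := by
  set g : ℕ → ℝ := fun k => min (x k) 1 * β ^ k
  have hg0 : ∀ k, 0 ≤ g k := fun k => mul_nonneg (le_min (hx k) zero_le_one) (by positivity)
  have hgβ : ∀ k, g k ≤ β ^ k := fun k => mul_le_of_le_one_left (by positivity) (min_le_right _ _)
  have hβsum : Summable (β ^ ·) := summable_geometric_of_lt_one hβ0 hβ1
  have hgsum : Summable g := hβsum.of_nonneg_of_le hg0 hgβ
  have hhead : ∑ k ∈ Finset.range N, g k ≤ ε / (1 - β) := by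
    calc ∑ k ∈ Finset.range N, g k ≤ ∑ k ∈ Finset.range N, ε * β ^ k := by
          refine Finset.sum_le_sum fun k hk => ?_
          exact mul_le_mul_of_nonneg_right ((min_le_left _ _).trans (hε k (Finset.mem_range.mp hk)))
            (by positivity)
      _ = ε * ∑ k ∈ Finset.Ico 0 N, β ^ k := by rw [Finset.mul_sum, Finset.range_eq_Ico]
      _ ≤ ε * (β ^ 0 / (1 - β)) := by gcongr; exact geom_sum_Ico_le_of_lt_one hβ0 hβ1
      _ = ε / (1 - β) := by rw [pow_zero, mul_one_div]
  have htail : ∑' k, g (k + N) ≤ β ^ N / (1 - β) := by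
    calc ∑' k, g (k + N) ≤ ∑' k, β ^ N * β ^ k :=
          (hgsum.comp_injective (add_left_injective N)).tsum_le_tsum
            (fun k => (hgβ _).trans_eq (by rw [pow_add, mul_comm])) (hβsum.mul_left _)
      _ = β ^ N / (1 - β) := by
          rw [tsum_mul_left, tsum_geometric_of_lt_one hβ0 hβ1, div_eq_mul_inv]
  rw [← hgsum.sum_add_tsum_nat_add N, add_div]
  exact add_le_add hhead htail

lemma eventually_mul_pow_ceil_log_sq_le {β c : ℝ} (hβ0 : 0 < β) (hβ1 : β < 1) (hc : 0 < c)
    (d : ℝ) : ∀ᶠ n : ℕ in atTop, c * β ^ ⌈Real.log n ^ 2⌉₊ ≤ (n : ℝ) ^ (-d) := by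
  set b := -Real.log β
  have hb : 0 < b := neg_pos.mpr (Real.log_neg hβ0 hβ1)
  have hlog : Tendsto (fun n : ℕ => Real.log n) atTop atTop :=
    Real.tendsto_log_atTop.comp tendsto_natCast_atTop_atTop
  filter_upwards [eventually_gt_atTop 0, hlog.eventually_ge_atTop ((d + 1) / b),
    hlog.eventually_ge_atTop (Real.log c), hlog.eventually_ge_atTop 0] with n hn hLd hLc hL0
  set L := Real.log n
  have hdL : d + 1 ≤ b * L := by rwa [div_le_iff₀' hb] at hLd
  have hexponent : Real.log c + Real.log β * L ^ 2 ≤ L * (-d) := by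
    nlinarith [mul_nonneg hL0 (sub_nonneg.mpr hdL)]
  calc c * β ^ ⌈L ^ 2⌉₊ ≤ c * β ^ (L ^ 2) := by
        gcongr
        rw [← Real.rpow_natCast]
        exact Real.rpow_le_rpow_of_exponent_ge hβ0 hβ1.le (Nat.le_ceil _)
    _ = Real.exp (Real.log c + Real.log β * L ^ 2) := by
        rw [Real.exp_add, Real.exp_log hc, Real.rpow_def_of_pos hβ0]
    _ ≤ Real.exp (L * (-d)) := Real.exp_le_exp.mpr hexponent
    _ = (n : ℝ) ^ (-d) := (Real.rpow_def_of_pos (by exact_mod_cast hn) _).symm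

lemma div_le_rpow_neg_inv_of_pow_le {x M : ℝ} {p : ℕ} (hM : 0 < M)
    (h : x ^ (p + 1) ≤ M ^ p) : x / M ≤ M ^ (-((p + 1 : ℕ) : ℝ)⁻¹) := by
  have hp : ((p + 1 : ℕ) : ℝ) ≠ 0 := by positivity
  have hroot : x ≤ M ^ ((p : ℝ) / (p + 1 : ℕ)) := by
    refine le_of_pow_le_pow_left₀ (Nat.succ_ne_zero p) (by positivity) ?_
    rwa [← Real.rpow_mul_natCast hM.le, div_mul_cancel₀ _ hp, Real.rpow_natCast]
  have hexp : -((p + 1 : ℕ) : ℝ)⁻¹ + 1 = (p : ℝ) / (p + 1 : ℕ) := by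
    field_simp
    push_cast
    ring
  rwa [div_le_iff₀ hM, ← Real.rpow_add_one hM.ne', hexp]

lemma cube_div_le_rpow_neg {A c L M : ℝ} {k : ℕ} (hc : 0 ≤ c) (hL : 0 ≤ L)
    (hk : k ≤ L ^ 2) (hAL : A ^ 14 ≤ c ^ 13 * L ^ 7) (hM : c * L ^ 7 ≤ M) (hM0 : 0 < M) :
    A * k ^ 3 / M ≤ M ^ (-(14⁻¹ : ℝ)) := by
  have hpow : (A * k ^ 3) ^ 14 ≤ M ^ 13 :=
    calc (A * k ^ 3) ^ 14 = A ^ 14 * (k : ℝ) ^ 42 := by ring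
      _ ≤ c ^ 13 * L ^ 7 * (L ^ 2) ^ 42 := by gcongr
      _ = (c * L ^ 7) ^ 13 := by ring
      _ ≤ M ^ 13 := by gcongr
  simpa using div_le_rpow_neg_inv_of_pow_le (p := 13) hM0 hpow

lemma eventually_tsum_min_excess_le {β c₁ : ℝ} (hβ0 : 0 < β) (hβ1 : β < 1) (hc₁ : 0 < c₁)
    (d : ℝ) : ∀ᶠ n : ℕ in atTop, ∀ m t : ℕ, c₁ * Real.log n ^ 7 ≤ m → 1 ≤ t →
      ∑' k : ℕ, min ((3 * Real.exp 5 * (k : ℝ) ^ 3 / m) ^ t) 1 * β ^ k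
        ≤ (m : ℝ) ^ (-(28⁻¹ * t : ℝ)) + (n : ℝ) ^ (-d) := by
  have h1β : 0 < 1 - β := sub_pos.mpr hβ1
  have hlog : Tendsto (fun n : ℕ => Real.log n) atTop atTop :=
    Real.tendsto_log_atTop.comp tendsto_natCast_atTop_atTop
  have hlog7 : Tendsto (fun n : ℕ => Real.log n ^ 7) atTop atTop :=
    (tendsto_pow_atTop (by norm_num)).comp hlog
  filter_upwards [eventually_mul_pow_ceil_log_sq_le hβ0 hβ1 (inv_pos.mpr h1β) d,
    hlog.eventually_ge_atTop 0,
    (hlog7.const_mul_atTop hc₁).eventually_ge_atTop (max 1 ((1 - β)⁻¹ ^ 28)),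
    (hlog7.const_mul_atTop (pow_pos hc₁ 13)).eventually_ge_atTop ((3 * Real.exp 5) ^ 14)]
    with n htail hL hM hA m t hm ht
  set M : ℝ := (m : ℝ)
  have hM1 : 1 ≤ M := (le_max_left _ _).trans (hM.trans hm)
  have hM0 : 0 < M := one_pos.trans_le hM1
  have hhead : ∀ k < ⌈Real.log n ^ 2⌉₊, (3 * Real.exp 5 * (k : ℝ) ^ 3 / M) ^ t
      ≤ M ^ (-(14⁻¹ * t : ℝ)) := by
    intro k hk
    rw [neg_mul_eq_neg_mul, Real.rpow_mul_natCast hM0.le]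
    exact pow_le_pow_left₀ (by positivity) (cube_div_le_rpow_neg hc₁.le hL
      (Nat.lt_ceil.mp hk).le hA hm hM0) t
  have habsorb : (1 - β)⁻¹ ≤ M ^ (28⁻¹ * t : ℝ) :=
    calc (1 - β)⁻¹ = ((1 - β)⁻¹ ^ 28) ^ ((28 : ℕ)⁻¹ : ℝ) :=
          (Real.pow_rpow_inv_natCast (by positivity) (by norm_num)).symm
      _ ≤ M ^ ((28 : ℕ)⁻¹ : ℝ) := by gcongr; exact (le_max_right _ _).trans (hM.trans hm)
      _ ≤ M ^ (28⁻¹ * t : ℝ) := by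
          gcongr
          push_cast
          exact le_mul_of_one_le_right (by norm_num) (by exact_mod_cast ht)
  calc _ ≤ (M ^ (-(14⁻¹ * t : ℝ)) + β ^ ⌈Real.log n ^ 2⌉₊) / (1 - β) :=
        tsum_min_mul_geometric_le _ hβ0.le hβ1 (fun k => by positivity) (by positivity) hhead
    _ = M ^ (-(14⁻¹ * t : ℝ)) * (1 - β)⁻¹ + (1 - β)⁻¹ * β ^ ⌈Real.log n ^ 2⌉₊ := by ring
    _ ≤ M ^ (-(14⁻¹ * t : ℝ)) * M ^ (28⁻¹ * t : ℝ) + (n : ℝ) ^ (-d) := by gcongr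
    _ = M ^ (-(28⁻¹ * t : ℝ)) + (n : ℝ) ^ (-d) := by
        rw [← Real.rpow_add hM0]
        ring_nf

/-- if `Pr(γ(C_v) ≥ t ∧ |C_v| = k) ≤ (3e⁵k³/m)^t · Pr(|C_v| = k)` and
`Pr(|C_v| ≥ k) ≤ β^k` for a constant `β ∈ (0,1)`, then — provided `m ≥ c₁ log⁷ n`
and `1 ≤ t ≤ c₂ log n` — we have
`Pr(γ(C_v) ≥ t) ≤ Σ_k min((3e⁵k³/m)^t, 1)·β^k ≤ m^{-Ω(t)} + n^{-ω(1)}`: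
there is a constant `c₃ > 0` such that for every `d > 0` and all large enough `n`
the tail is at most `m^{-c₃ t} + n^{-d}`. -/
theorem component_excess_tail :
    ∀ (β c₁ c₂ : ℝ), 0 < β → β < 1 → 0 < c₁ → 0 < c₂ →
    ∃ c₃ : ℝ, 0 < c₃ ∧ ∀ d : ℝ, 0 < d → ∃ n₀ : ℕ, ∀ n : ℕ, n₀ ≤ n →
    ∀ m t : ℕ, c₁ * (Real.log n) ^ 7 ≤ m → 1 ≤ t → (t : ℝ) ≤ c₂ * Real.log n →
    ∀ (Ω : Type) (_ : MeasurableSpace Ω) (ℙ : Measure Ω), IsProbabilityMeasure ℙ →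
    ∀ G C : Ω → ℕ,
    (∀ k : ℕ, ℙ {ω | k ≤ C ω} ≤ ENNReal.ofReal (β ^ k)) →
    (∀ k : ℕ, ℙ ({ω | t ≤ G ω} ∩ {ω | C ω = k})
        ≤ ENNReal.ofReal ((3 * Real.exp 5 * (k : ℝ) ^ 3 / m) ^ t) * ℙ {ω | C ω = k}) →
    ℙ {ω | t ≤ G ω}
        ≤ ENNReal.ofReal (∑' k : ℕ, min ((3 * Real.exp 5 * (k : ℝ) ^ 3 / m) ^ t) 1 * β ^ k) ∧
      (∑' k : ℕ, min ((3 * Real.exp 5 * (k : ℝ) ^ 3 / m) ^ t) 1 * β ^ k)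
        ≤ (m : ℝ) ^ (-(c₃ * t)) + (n : ℝ) ^ (-d) := by
  intro β c₁ c₂ hβ0 hβ1 hc₁ _
  refine ⟨28⁻¹, by norm_num, fun d _ => ?_⟩
  obtain ⟨n₀, hn₀⟩ := eventually_atTop.mp (eventually_tsum_min_excess_le hβ0 hβ1 hc₁ d)
  refine ⟨n₀, fun n hn m t hm ht _ Ω _ ℙ _ G C hC hGC => ⟨?_, hn₀ n hn m t hm ht⟩⟩
  exact measure_le_ofReal_tsum_min_mul ℙ _ C (fun k => by positivity) (fun k => by positivity)
    (summable_geometric_of_lt_one hβ0.le hβ1)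
    (fun k => (measure_mono fun ω (hω : C ω = k) => hω.ge).trans (hC k)) hGC
end
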